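/- The π-bisimilarity is contained in the absolute equality: ≃_π ⊆ =_π, i.e., every pair of π-bisimilar π-processes is absolutely equal. -/

import Mathlib

set_option linter.unusedVariables false

/-! Core formalization of the π-calculus with name dichotomy.
Names are natural numbers; name variables are natural numbers (kept disjoint
via the sum-like type `NV`). -/

abbrev Name := ℕ

/-- Names and name variables. -/
inductive NV : Type
  | nm : Name → NV
  | vr : ℕ → NV
  deriving DecidableEq

/-- π-terms.  Input and output choices have a finite index set `Fin k`. -/
inductive Term : Type
  | nil : Term
  | inp : NV → ℕ → (k : ℕ) → (Fin k → Term) → Term          -- Σ_{i∈I} n(x).T_i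
  | out : NV → (k : ℕ) → (Fin k → NV) → (Fin k → Term) → Term -- Σ_{i∈I} n̄ m_i.T_i
  | par : Term → Term → Term
  | res : Name → Term → Term
  | mat : NV → NV → Term → Term
  | mis : NV → NV → Term → Term
  | repInp : NV → ℕ → Term → Term                             -- !n(x).T
  | repOut : NV → NV → Term → Term                            -- !n̄m.T

namespace NV

/-- Apply a map on variables. -/
def sub (σ : ℕ → NV) : NV → NV
  | nm a => nm a
  | vr x => σ x

/-- Apply a map on names. -/
def ren (α : Name → Name) : NV → NV
  | nm a => nm (α a)
  | vr x => vr x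

def vars : NV → Set ℕ
  | nm _ => ∅
  | vr x => {x}

def names : NV → Set Name
  | nm a => {a}
  | vr _ => ∅

end NV

namespace Term

/-- Apply a substitution (a map from name variables to names-or-variables),
    not substituting bound occurrences. -/
def applyVar (σ : ℕ → NV) : Term → Term
  | nil => nil
  | inp n x k Ts => inp (n.sub σ) x k (fun i => (Ts i).applyVar (Function.update σ x (NV.vr x)))
  | out n k ms Ts => out (n.sub σ) k (fun i => (ms i).sub σ) (fun i => (Ts i).applyVar σ)
  | par S T => par (S.applyVar σ) (T.applyVar σ)
  | res c T => res c (T.applyVar σ)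
  | mat p q T => mat (p.sub σ) (q.sub σ) (T.applyVar σ)
  | mis p q T => mis (p.sub σ) (q.sub σ) (T.applyVar σ)
  | repInp n x T => repInp (n.sub σ) x (T.applyVar (Function.update σ x (NV.vr x)))
  | repOut n m T => repOut (n.sub σ) (m.sub σ) (T.applyVar σ)

/-- Substitute the single name `c` for the name variable `x`: `T{c/x}`. -/
def subst1 (x : ℕ) (c : Name) (T : Term) : Term :=
  T.applyVar (fun y => if y = x then NV.nm c else NV.vr y)

/-- Apply an assignment (a total map from name variables to names). -/
def assign (ρ : ℕ → Name) (T : Term) : Term :=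
  T.applyVar (fun x => NV.nm (ρ x))

/-- Apply a renaming to all names of a term. -/
def applyName (α : Name → Name) : Term → Term
  | nil => nil
  | inp n x k Ts => inp (n.ren α) x k (fun i => (Ts i).applyName α)
  | out n k ms Ts => out (n.ren α) k (fun i => (ms i).ren α) (fun i => (Ts i).applyName α)
  | par S T => par (S.applyName α) (T.applyName α)
  | res c T => res (α c) (T.applyName α)
  | mat p q T => mat (p.ren α) (q.ren α) (T.applyName α)
  | mis p q T => mis (p.ren α) (q.ren α) (T.applyName α)
  | repInp n x T => repInp (n.ren α) x (T.applyName α)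
  | repOut n m T => repOut (n.ren α) (m.ren α) (T.applyName α)

/-- Free name variables. -/
def fvar : Term → Set ℕ
  | nil => ∅
  | inp n x k Ts => n.vars ∪ ((⋃ i, (Ts i).fvar) \ {x})
  | out n k ms Ts => n.vars ∪ (⋃ i, (ms i).vars ∪ (Ts i).fvar)
  | par S T => S.fvar ∪ T.fvar
  | res _ T => T.fvar
  | mat p q T => p.vars ∪ q.vars ∪ T.fvar
  | mis p q T => p.vars ∪ q.vars ∪ T.fvar
  | repInp n x T => n.vars ∪ (T.fvar \ {x})
  | repOut n m T => n.vars ∪ m.vars ∪ T.fvar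

/-- Global (non-local) names. -/
def gname : Term → Set Name
  | nil => ∅
  | inp n _ k Ts => n.names ∪ (⋃ i, (Ts i).gname)
  | out n k ms Ts => n.names ∪ (⋃ i, (ms i).names ∪ (Ts i).gname)
  | par S T => S.gname ∪ T.gname
  | res c T => T.gname \ {c}
  | mat p q T => p.names ∪ q.names ∪ T.gname
  | mis p q T => p.names ∪ q.names ∪ T.gname
  | repInp n _ T => n.names ∪ T.gname
  | repOut n m T => n.names ∪ m.names ∪ T.gname

end Term

/-- A π-process is a closed π-term. -/
def Closed (P : Term) : Prop := P.fvar = ∅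

def IsProc (P : Term) : Prop := Closed P

/-- Labels (external actions). -/
inductive Label : Type
  | inp : Name → Name → Label      -- ab
  | out : Name → Name → Label      -- āb
  | bout : Name → Name → Label     -- ā(c)
  deriving DecidableEq

def Label.names : Label → Set Name
  | .inp a b => {a, b}
  | .out a b => {a, b}
  | .bout a c => {a, c}

def Label.ren (α : Name → Name) : Label → Label
  | .inp a b => .inp (α a) (α b)
  | .out a b => .out (α a) (α b)
  | .bout a c => .bout (α a) (α c)

/-- Actions: internal action τ or a label. -/
inductive Act : Type
  | tau : Act
  | lab : Label → Act

def Act.names : Act → Set Name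
  | .tau => ∅
  | .lab ℓ => ℓ.names

def Act.ren (α : Name → Name) : Act → Act
  | .tau => .tau
  | .lab ℓ => .lab (ℓ.ren α)

/-- The labelled transition system of the π-calculus. -/
inductive Step : Term → Act → Term → Prop
  | inp {a : Name} {x : ℕ} {k : ℕ} {Ts : Fin k → Term} (i : Fin k) (c : Name) :
      Step (.inp (.nm a) x k Ts) (.lab (.inp a c)) ((Ts i).subst1 x c)
  | out {a : Name} {k : ℕ} {ms : Fin k → NV} {Ts : Fin k → Term} (i : Fin k) {c : Name}
      (h : ms i = .nm c) :
      Step (.out (.nm a) k ms Ts) (.lab (.out a c)) (Ts i)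
  | parR {S T T' : Term} {μ : Act} :
      Step T μ T' → Step (.par S T) μ (.par S T')
  | parL {S S' T : Term} {μ : Act} :
      Step S μ S' → Step (.par S T) μ (.par S' T)
  | commL {S S' T T' : Term} {a b : Name} :
      Step S (.lab (.inp a b)) S' → Step T (.lab (.out a b)) T' →
      Step (.par S T) .tau (.par S' T')
  | commR {S S' T T' : Term} {a b : Name} :
      Step S (.lab (.out a b)) S' → Step T (.lab (.inp a b)) T' →
      Step (.par S T) .tau (.par S' T')
  | closeL {S S' T T' : Term} {a c : Name} :
      Step S (.lab (.inp a c)) S' → Step T (.lab (.bout a c)) T' →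
      Step (.par S T) .tau (.res c (.par S' T'))
  | closeR {S S' T T' : Term} {a c : Name} :
      Step S (.lab (.bout a c)) S' → Step T (.lab (.inp a c)) T' →
      Step (.par S T) .tau (.res c (.par S' T'))
  | open_ {T T' : Term} {a c : Name} :
      Step T (.lab (.out a c)) T' → Step (.res c T) (.lab (.bout a c)) T'
  | resStep {T T' : Term} {μ : Act} {c : Name} :
      Step T μ T' → c ∉ μ.names → Step (.res c T) μ (.res c T')
  | matStep {T T' : Term} {μ : Act} {a : Name} :
      Step T μ T' → Step (.mat (.nm a) (.nm a) T) μ T'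
  | misStep {T T' : Term} {μ : Act} {a b : Name} :
      a ≠ b → Step T μ T' → Step (.mis (.nm a) (.nm b) T) μ T'
  | repOutStep {a b : Name} {T : Term} :
      Step (.repOut (.nm a) (.nm b) T) (.lab (.out a b)) (.par T (.repOut (.nm a) (.nm b) T))
  | repInpStep {a : Name} {x : ℕ} {T : Term} (b : Name) :
      Step (.repInp (.nm a) x T) (.lab (.inp a b)) (.par (T.subst1 x b) (.repInp (.nm a) x T))

/-- Internal action. -/
def Tau (P Q : Term) : Prop := Step P .tau Q

/-- `P ⟹ Q` : reflexive and transitive closure of τ. -/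
def WeakTau : Term → Term → Prop := Relation.ReflTransGen Tau

/-- `P ⇓` : observability. -/
def Obs (P : Term) : Prop := ∃ P' ℓ P'', WeakTau P P' ∧ Step P' (.lab ℓ) P''

abbrev PRel : Type := Term → Term → Prop

def OnProc (R : PRel) : Prop := ∀ P Q, R P Q → IsProc P ∧ IsProc Q

def ReflProc (R : PRel) : Prop := ∀ P, IsProc P → R P P

def Equipollent (R : PRel) : Prop := ∀ P Q, R P Q → (Obs P ↔ Obs Q)

def Extensional (R : PRel) : Prop :=
  (∀ L M P Q, R L M → R P Q → R (.par L P) (.par M Q)) ∧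
  (∀ P Q c, R P Q → R (.res c P) (.res c Q))

/-- An infinite τ-sequence. -/
def TauSeq (f : ℕ → Term) : Prop := ∀ n, Tau (f n) (f (n + 1))

/-- `P —τ→⟹ P'`. -/
def TauWeak (P P' : Term) : Prop := ∃ P₀, Tau P P₀ ∧ WeakTau P₀ P'

def Codivergent (R : PRel) : Prop := ∀ P Q, R P Q →
  ((∀ f : ℕ → Term, f 0 = Q → TauSeq f →
      ∃ k, 1 ≤ k ∧ ∃ P', TauWeak P P' ∧ R P' (f k)) ∧
   (∀ f : ℕ → Term, f 0 = P → TauSeq f →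
      ∃ k, 1 ≤ k ∧ ∃ Q', TauWeak Q Q' ∧ R Q' (f k)))

/-- Branching-style bisimulation. -/
def Bisim (R : PRel) : Prop := ∀ P Q, R P Q →
  ((∀ Q', Tau Q Q' →
      (∃ P', WeakTau P P' ∧ R P' Q ∧ R P' Q') ∨
      (∃ P'' P', WeakTau P P'' ∧ R P'' Q ∧ Tau P'' P' ∧ R P' Q')) ∧
   (∀ P', Tau P P' →
      (∃ Q', WeakTau Q Q' ∧ R P Q' ∧ R P' Q') ∨
      (∃ Q'' Q', WeakTau Q Q'' ∧ R P Q'' ∧ Tau Q'' Q' ∧ R P' Q')))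

/-- A relation qualifying for the absolute equality. -/
def GoodAbs (R : PRel) : Prop :=
  OnProc R ∧ ReflProc R ∧ Equipollent R ∧ Extensional R ∧ Codivergent R ∧ Bisim R

/-- The absolute equality: the largest reflexive, equipollent, extensional,
codivergent bisimulation on π-processes. -/
def AbsEq (P Q : Term) : Prop := ∃ R : PRel, GoodAbs R ∧ R P Q

/-- A π-bisimulation: a codivergent (branching) bisimulation on π-processes in
which external actions are explicitly simulated in the branching style. -/
def PiBisimGood (R : PRel) : Prop :=
  OnProc R ∧ Codivergent R ∧ Bisim R ∧
  (∀ P Q, R P Q →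
    ((∀ ℓ Q', Step Q (.lab ℓ) Q' →
        ∃ P'' P', WeakTau P P'' ∧ Step P'' (.lab ℓ) P' ∧ R P'' Q ∧ R P' Q') ∧
     (∀ ℓ P', Step P (.lab ℓ) P' →
        ∃ Q'' Q', WeakTau Q Q'' ∧ Step Q'' (.lab ℓ) Q' ∧ R P Q'' ∧ R P' Q')))

/-- The π-bisimilarity ≃_π : the largest π-bisimulation. -/
def PiBisimilar (P Q : Term) : Prop := ∃ R : PRel, PiBisimGood R ∧ R P Q

/-- Extension of ≃_π to open π-terms by closure under assignments. -/
def PiBisimilarOpen (S T : Term) : Prop :=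
  ∀ ρ : ℕ → Name, PiBisimilar (S.assign ρ) (T.assign ρ)


/-! Close a π-bisimulation `R` under symmetry, identity on processes, composition and
localization. The result is reflexive and extensional by construction. It is a branching
bisimulation, and it is equipollent, because a π-bisimulation answers every labelled step by
internal steps followed by the same labelled step, so a communication of `M | Q` is answered by a
communication of `L | P`. For codivergence, an infinite τ-run of `M | Q` either contains a
communication, and `L | P` answers that with a real τ-step, or it interleaves runs of `M` and `Q`,
one of which is infinite and is covered by induction. -/

open Relation

lemma NV.vars_sub (σ : ℕ → NV) (n : NV) : (n.sub σ).vars = ⋃ x ∈ n.vars, (σ x).vars := by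
  cases n <;> simp [NV.sub, NV.vars]

lemma NV.biUnion_vars_update_self_sdiff (σ : ℕ → NV) (x : ℕ) (s : Set ℕ) :
    (⋃ y ∈ s, (Function.update σ x (.vr x) y).vars) \ {x} ⊆ ⋃ y ∈ s \ {x}, (σ y).vars := by
  intro z
  simp only [Set.mem_sdiff, Set.mem_iUnion, Set.mem_singleton_iff, exists_prop]
  rintro ⟨⟨y, hy, hz⟩, hzx⟩
  obtain rfl | hyx := eq_or_ne y x
  · simp [NV.vars] at hz; exact absurd hz hzx
  · exact ⟨y, ⟨hy, hyx⟩, by rwa [Function.update_of_ne hyx] at hz⟩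

lemma Term.fvar_applyVar_subset (T : Term) (σ : ℕ → NV) :
    (T.applyVar σ).fvar ⊆ ⋃ x ∈ T.fvar, (σ x).vars := by
  induction T generalizing σ with
  | inp n x k Ts ih =>
    simp only [Term.applyVar, Term.fvar, NV.vars_sub, Set.biUnion_union, Set.iUnion_sdiff,
      Set.biUnion_iUnion]
    gcongr with i
    exact (Set.sdiff_subset_sdiff_left (ih i _)).trans (NV.biUnion_vars_update_self_sdiff σ x _)
  | repInp n x T ih =>
    simp only [Term.applyVar, Term.fvar, NV.vars_sub, Set.biUnion_union]
    gcongr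
    exact (Set.sdiff_subset_sdiff_left (ih _)).trans (NV.biUnion_vars_update_self_sdiff σ x _)
  | _ =>
    simp only [Term.applyVar, Term.fvar, NV.vars_sub, Set.biUnion_union, Set.biUnion_iUnion,
      Set.biUnion_empty]
    first | apply_assumption | (gcongr <;> apply_assumption)

lemma Term.fvar_subst1_subset (T : Term) (x : ℕ) (c : Name) :
    (T.subst1 x c).fvar ⊆ T.fvar \ {x} := by
  refine (T.fvar_applyVar_subset _).trans (Set.iUnion₂_subset fun y hy z hz => ?_)
  by_cases hyx : y = x <;> simp_all [NV.vars]

lemma Closed.subst1 {T : Term} {x : ℕ} (h : T.fvar ⊆ {x}) (c : Name) : Closed (T.subst1 x c) :=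
  Set.subset_eq_empty (T.fvar_subst1_subset x c) (Set.sdiff_eq_empty.2 h)

lemma Step.closed {T T' : Term} {μ : Act} (h : Step T μ T') (hT : Closed T) : Closed T' := by
  induction h with
  | inp i c =>
    simp only [Closed, Term.fvar, Set.union_empty_iff, Set.sdiff_eq_empty] at hT
    exact .subst1 ((Set.subset_iUnion _ i).trans hT.2) c
  | repInpStep b =>
    simp only [Closed, Term.fvar, Set.union_empty_iff, Set.sdiff_eq_empty] at hT ⊢
    exact ⟨Closed.subst1 hT.2 b, by simpa [NV.vars] using hT.2⟩
  | _ => simp_all [Closed, Term.fvar]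

section Interleaving

variable {α : Type*} {r : α → α → Prop} {u : ℕ → α}

lemma eq_of_forall_Ico_notMem {A : Set ℕ} (hstut : ∀ n ∉ A, u (n + 1) = u n) {a b : ℕ}
    (hab : a ≤ b) (hgap : ∀ m ∈ Set.Ico a b, m ∉ A) : u b = u a := by
  induction b, hab using Nat.le_induction with
  | base => rfl
  | succ b hab ih =>
    rw [hstut b (hgap b ⟨hab, Nat.lt_add_one b⟩),
      ih fun m hm => hgap m ⟨hm.1, hm.2.trans (Nat.lt_add_one b)⟩]

lemma exists_strictMono_chain_of_stutter {A : Set ℕ} (hA : A.Infinite)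
    (hstep : ∀ n ∈ A, r (u n) (u (n + 1))) (hstut : ∀ n ∉ A, u (n + 1) = u n) :
    ∃ e : ℕ → ℕ, StrictMono e ∧ u (e 0) = u 0 ∧ ∀ j, r (u (e j)) (u (e (j + 1))) := by
  set e := Nat.nth (· ∈ A)
  have he : StrictMono e := Nat.nth_strictMono hA
  refine ⟨e, he, eq_of_forall_Ico_notMem hstut (Nat.zero_le _) fun m hm hmA => ?_, fun j => ?_⟩
  · exact (Nat.sInf_le hmA).not_gt (by simpa [e, Nat.nth_zero] using hm.2)
  · rw [eq_of_forall_Ico_notMem hstut (show e j + 1 ≤ e (j + 1) from he (Nat.lt_add_one j))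
      fun m hm hmA => (Nat.le_nth_of_lt_nth_succ hm.2 hmA).not_gt hm.1]
    exact hstep _ (Nat.nth_mem_of_infinite hA j)

lemma exists_strictMono_chain_of_interleave {v : ℕ → α}
    (huv : ∀ n, (r (u n) (u (n + 1)) ∧ v (n + 1) = v n) ∨
      (u (n + 1) = u n ∧ r (v n) (v (n + 1)))) :
    ∃ e : ℕ → ℕ, StrictMono e ∧
      ((u (e 0) = u 0 ∧ ∀ j, r (u (e j)) (u (e (j + 1)))) ∨
        (v (e 0) = v 0 ∧ ∀ j, r (v (e j)) (v (e (j + 1))))) := by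
  set A := {n | r (u n) (u (n + 1)) ∧ v (n + 1) = v n}
  have hAc : ∀ n ∉ A, u (n + 1) = u n ∧ r (v n) (v (n + 1)) :=
    fun n hn => (huv n).resolve_left hn
  rcases Set.infinite_union.1 (A.union_compl_self ▸ Set.infinite_univ) with hA | hA
  · obtain ⟨e, he, h0, hchain⟩ :=
      exists_strictMono_chain_of_stutter hA (fun n hn => hn.1) fun n hn => (hAc n hn).1
    exact ⟨e, he, .inl ⟨h0, hchain⟩⟩
  · obtain ⟨e, he, h0, hchain⟩ :=
      exists_strictMono_chain_of_stutter hA (fun n hn => (hAc n hn).2) fun n hn => (not_not.1 hn).2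
    exact ⟨e, he, .inr ⟨h0, hchain⟩⟩

end Interleaving

lemma tauWeak_iff_transGen {P Q : Term} : TauWeak P Q ↔ TransGen Tau P Q :=
  TransGen.head'_iff.symm

lemma WeakTau.par_left {L L' : Term} (h : WeakTau L L') (P : Term) :
    WeakTau (.par L P) (.par L' P) :=
  ReflTransGen.lift (Term.par · P) (fun _ _ => Step.parL) _ _ h

lemma WeakTau.par_right {P P' : Term} (L : Term) (h : WeakTau P P') :
    WeakTau (.par L P) (.par L P') :=
  ReflTransGen.lift (Term.par L ·) (fun _ _ => Step.parR) _ _ h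

lemma WeakTau.par {L L' P P' : Term} (hL : WeakTau L L') (hP : WeakTau P P') :
    WeakTau (.par L P) (.par L' P') :=
  (hL.par_left P).trans (hP.par_right L')

lemma Tau.res {P P' : Term} (c : Name) (h : Tau P P') : Tau (.res c P) (.res c P') :=
  Step.resStep h (Set.notMem_empty c)

lemma WeakTau.res {P P' : Term} (c : Name) (h : WeakTau P P') :
    WeakTau (.res c P) (.res c P') :=
  ReflTransGen.lift (Term.res c) (fun _ _ => Tau.res c) _ _ h

lemma TauWeak.par_weakTau {L L' P P' : Term} (hL : TauWeak L L') (hP : WeakTau P P') :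
    TauWeak (.par L P) (.par L' P') :=
  tauWeak_iff_transGen.2 <| TransGen.trans_left
    (TransGen.lift (Term.par · P) (fun _ _ => Step.parL) _ _ (tauWeak_iff_transGen.1 hL))
    (hP.par_right L')

lemma WeakTau.par_tauWeak {L L' P P' : Term} (hL : WeakTau L L') (hP : TauWeak P P') :
    TauWeak (.par L P) (.par L' P') :=
  tauWeak_iff_transGen.2 <| TransGen.trans_right (hL.par_left P)
    (TransGen.lift (Term.par L' ·) (fun _ _ => Step.parR) _ _ (tauWeak_iff_transGen.1 hP))

lemma TauWeak.res {P P' : Term} (c : Name) (h : TauWeak P P') :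
    TauWeak (.res c P) (.res c P') :=
  tauWeak_iff_transGen.2 <|
    TransGen.lift (Term.res c) (fun _ _ => Tau.res c) _ _ (tauWeak_iff_transGen.1 h)

lemma TauWeak.of_weakTau_tau {P P'' P' : Term} (h : WeakTau P P'') (h' : Tau P'' P') :
    TauWeak P P' :=
  tauWeak_iff_transGen.2 (TransGen.tail' h h')

lemma Tau.res_inv {c : Name} {P Z : Term} (h : Tau (.res c P) Z) :
    ∃ P', Tau P P' ∧ Z = .res c P' := by
  cases h with
  | resStep h _ => exact ⟨_, h, rfl⟩

lemma TauSeq.res_inv {f : ℕ → Term} {c : Name} {Q : Term} (hf : TauSeq f)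
    (h0 : f 0 = .res c Q) : ∃ g : ℕ → Term, g 0 = Q ∧ TauSeq g ∧ ∀ n, f n = .res c (g n) := by
  have hres : ∀ n, ∃ X, f n = .res c X := by
    intro n
    induction n with
    | zero => exact ⟨Q, h0⟩
    | succ n ih =>
      obtain ⟨X, hX⟩ := ih
      obtain ⟨X', -, hX'⟩ := Tau.res_inv (hX ▸ hf n)
      exact ⟨X', hX'⟩
  choose g hg using hres
  refine ⟨g, (Term.res.inj (h0 ▸ hg 0)).2.symm, fun n => ?_, hg⟩
  obtain ⟨X', hX', hX⟩ := Tau.res_inv (hg n ▸ hf n)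
  rwa [← (Term.res.inj ((hg (n + 1)).symm.trans hX)).2] at hX'

def ParComponentStep (X Y Z : Term) : Prop :=
  (∃ X', Tau X X' ∧ Z = .par X' Y) ∨ (∃ Y', Tau Y Y' ∧ Z = .par X Y')

lemma TauSeq.exists_interleave {f : ℕ → Term} {M Q : Term} (h0 : f 0 = .par M Q)
    (hcomp : ∀ n X Y, WeakTau M X → WeakTau Q Y → f n = .par X Y →
      ParComponentStep X Y (f (n + 1))) :
    ∃ g h : ℕ → Term, (∀ n, f n = .par (g n) (h n) ∧ WeakTau M (g n) ∧ WeakTau Q (h n)) ∧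
      ∀ n, (Tau (g n) (g (n + 1)) ∧ h (n + 1) = h n) ∨
        (g (n + 1) = g n ∧ Tau (h n) (h (n + 1))) := by
  have hpar : ∀ n, ∃ X Y, f n = .par X Y ∧ WeakTau M X ∧ WeakTau Q Y := by
    intro n
    induction n with
    | zero => exact ⟨M, Q, h0, .refl, .refl⟩
    | succ n ih =>
      obtain ⟨X, Y, hf, hM, hQ⟩ := ih
      rcases hcomp n X Y hM hQ hf with ⟨X', hX, hf'⟩ | ⟨Y', hY, hf'⟩
      · exact ⟨X', Y, hf', hM.tail hX, hQ⟩
      · exact ⟨X, Y', hf', hM, hQ.tail hY⟩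
  choose g h hgh using hpar
  refine ⟨g, h, hgh, fun n => ?_⟩
  obtain ⟨hf, hM, hQ⟩ := hgh n
  rcases hcomp n _ _ hM hQ hf with ⟨X', hX, hf'⟩ | ⟨Y', hY, hf'⟩
  · obtain ⟨rfl, hh⟩ := Term.par.inj ((hgh (n + 1)).1.symm.trans hf')
    exact .inl ⟨hX, hh⟩
  · obtain ⟨hg, rfl⟩ := Term.par.inj ((hgh (n + 1)).1.symm.trans hf')
    exact .inr ⟨hg, hY⟩

/-- `base_symm` makes the closure symmetric, so that each two-sided clause of `GoodAbs`
follows from its first half. -/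
inductive ExtClosure (R : PRel) : PRel
  | base {P Q : Term} : R P Q → ExtClosure R P Q
  | base_symm {P Q : Term} : R Q P → ExtClosure R P Q
  | refl {P : Term} : IsProc P → ExtClosure R P P
  | par {L M P Q : Term} : ExtClosure R L M → ExtClosure R P Q →
      ExtClosure R (.par L P) (.par M Q)
  | res {P Q : Term} (c : Name) : ExtClosure R P Q → ExtClosure R (.res c P) (.res c Q)

def SimulatesTau (S : PRel) (P Q Q' : Term) : Prop :=
  (∃ P', WeakTau P P' ∧ S P' Q ∧ S P' Q') ∨
    (∃ P'' P', WeakTau P P'' ∧ S P'' Q ∧ Tau P'' P' ∧ S P' Q')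

lemma SimulatesTau.map {S S' : PRel} {P Q Q' : Term} (C C' : Term → Term)
    (hC : ∀ X Y, Tau X Y → Tau (C X) (C Y)) (hS : ∀ X Y, S X Y → S' (C X) (C' Y))
    (h : SimulatesTau S P Q Q') : SimulatesTau S' (C P) (C' Q) (C' Q') := by
  rcases h with ⟨P', hw, h₁, h₂⟩ | ⟨P'', P', hw, h₁, ht, h₂⟩
  · exact .inl ⟨C P', ReflTransGen.lift C hC _ _ hw, hS _ _ h₁, hS _ _ h₂⟩
  · exact .inr ⟨C P'', C P', ReflTransGen.lift C hC _ _ hw, hS _ _ h₁, hC _ _ ht, hS _ _ h₂⟩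

def MatchesDivergence (S : PRel) (P Q : Term) : Prop :=
  ∀ f : ℕ → Term, TauSeq f → f 0 = Q → ∃ k, 1 ≤ k ∧ ∃ P', TauWeak P P' ∧ S P' (f k)

namespace ExtClosure

variable {R : PRel}

lemma symm {P Q : Term} (h : ExtClosure R P Q) : ExtClosure R Q P := by
  induction h with
  | base h => exact .base_symm h
  | base_symm h => exact .base h
  | refl h => exact .refl h
  | par _ _ ihL ihP => exact .par ihL ihP
  | res c _ ih => exact .res c ih

lemma onProc (hR : OnProc R) : OnProc (ExtClosure R) := by
  intro P Q h
  induction h with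
  | base h => exact hR _ _ h
  | base_symm h => exact (hR _ _ h).symm
  | refl h => exact ⟨h, h⟩
  | par _ _ ihL ihP =>
    simp only [IsProc, Closed, Term.fvar, Set.union_empty_iff] at ihL ihP ⊢
    exact ⟨⟨ihL.1, ihP.1⟩, ihL.2, ihP.2⟩
  | res c _ ih => exact ih

lemma simulates_label (hR : PiBisimGood R) {P Q Q' : Term} {ℓ : Label}
    (h : ExtClosure R P Q) (hQ : Step Q (.lab ℓ) Q') :
    ∃ P'' P', WeakTau P P'' ∧ Step P'' (.lab ℓ) P' ∧
      ExtClosure R P'' Q ∧ ExtClosure R P' Q' := by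
  induction h generalizing ℓ Q' with
  | base h =>
    obtain ⟨P'', P', hw, hs, h₁, h₂⟩ := (hR.2.2.2 _ _ h).1 ℓ Q' hQ
    exact ⟨P'', P', hw, hs, .base h₁, .base h₂⟩
  | base_symm h =>
    obtain ⟨P'', P', hw, hs, h₁, h₂⟩ := (hR.2.2.2 _ _ h).2 ℓ Q' hQ
    exact ⟨P'', P', hw, hs, .base_symm h₁, .base_symm h₂⟩
  | @refl P hP => exact ⟨P, Q', .refl, hQ, .refl hP, .refl (hQ.closed hP)⟩
  | par hLM hPQ ihL ihP =>
    cases hQ with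
    | parR hQ =>
      obtain ⟨P'', P', hw, hs, h₁, h₂⟩ := ihP hQ
      exact ⟨_, _, hw.par_right _, .parR hs, .par hLM h₁, .par hLM h₂⟩
    | parL hM =>
      obtain ⟨L'', L', hw, hs, h₁, h₂⟩ := ihL hM
      exact ⟨_, _, hw.par_left _, .parL hs, .par h₁ hPQ, .par h₂ hPQ⟩
  | res c _ ih =>
    cases hQ with
    | open_ hQ =>
      obtain ⟨P'', P', hw, hs, h₁, h₂⟩ := ih hQ
      exact ⟨_, _, hw.res c, .open_ hs, .res c h₁, h₂⟩
    | resStep hQ hc =>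
      obtain ⟨P'', P', hw, hs, h₁, h₂⟩ := ih hQ
      exact ⟨_, _, hw.res c, .resStep hs hc, .res c h₁, .res c h₂⟩

lemma par_tau_cases (hR : PiBisimGood R) {L M P Q Z : Term} (hLM : ExtClosure R L M)
    (hPQ : ExtClosure R P Q) (hZ : Tau (.par M Q) Z) :
    ParComponentStep M Q Z ∨ ∃ W'' W, WeakTau (.par L P) W'' ∧
      ExtClosure R W'' (.par M Q) ∧ Tau W'' W ∧ ExtClosure R W Z := by
  cases hZ with
  | parL hM => exact .inl (.inl ⟨_, hM, rfl⟩)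
  | parR hQ => exact .inl (.inr ⟨_, hQ, rfl⟩)
  | commL hM hQ | commR hM hQ | closeL hM hQ | closeR hM hQ =>
    obtain ⟨L'', L', hwL, hsL, hL₁, hL₂⟩ := hLM.simulates_label hR hM
    obtain ⟨P'', P', hwP, hsP, hP₁, hP₂⟩ := hPQ.simulates_label hR hQ
    first
      | exact .inr ⟨_, _, hwL.par hwP, .par hL₁ hP₁, .commL hsL hsP, .par hL₂ hP₂⟩
      | exact .inr ⟨_, _, hwL.par hwP, .par hL₁ hP₁, .commR hsL hsP, .par hL₂ hP₂⟩
      | exact .inr ⟨_, _, hwL.par hwP, .par hL₁ hP₁, .closeL hsL hsP, .res _ (.par hL₂ hP₂)⟩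
      | exact .inr ⟨_, _, hwL.par hwP, .par hL₁ hP₁, .closeR hsL hsP, .res _ (.par hL₂ hP₂)⟩

lemma simulatesTau (hR : PiBisimGood R) {P Q Q' : Term} (h : ExtClosure R P Q)
    (hQ : Tau Q Q') : SimulatesTau (ExtClosure R) P Q Q' := by
  induction h generalizing Q' with
  | base h =>
    exact SimulatesTau.map id id (fun _ _ => id) (fun _ _ => .base) ((hR.2.2.1 _ _ h).1 Q' hQ)
  | base_symm h =>
    exact SimulatesTau.map id id (fun _ _ => id) (fun _ _ => .base_symm)
      ((hR.2.2.1 _ _ h).2 Q' hQ)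
  | @refl P hP => exact .inr ⟨P, Q', .refl, .refl hP, hQ, .refl (hQ.closed hP)⟩
  | par hLM hPQ ihL ihP =>
    rcases hLM.par_tau_cases hR hPQ hQ with (⟨M', hM, rfl⟩ | ⟨Q₁, hQ₁, rfl⟩) | hcomm
    · exact (ihL hM).map (Term.par · _) (Term.par · _) (fun _ _ => Step.parL)
        fun _ _ h => .par h hPQ
    · exact (ihP hQ₁).map (Term.par _ ·) (Term.par _ ·) (fun _ _ => Step.parR)
        fun _ _ h => .par hLM h
    · exact .inr hcomm
  | res c _ ih =>
    obtain ⟨Q₁, hQ₁, rfl⟩ := Tau.res_inv hQ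
    exact (ih hQ₁).map (Term.res c) (Term.res c) (fun _ _ => Tau.res c) fun _ _ => .res c

lemma exists_weakTau (hR : PiBisimGood R) {P Q Q' : Term} (h : ExtClosure R P Q)
    (hQ : WeakTau Q Q') : ∃ P', WeakTau P P' ∧ ExtClosure R P' Q' := by
  induction hQ with
  | refl => exact ⟨P, .refl, h⟩
  | tail _ hQ ih =>
    obtain ⟨P₁, hw₁, h₁⟩ := ih
    rcases h₁.simulatesTau hR hQ with ⟨P₂, hw₂, -, h₂⟩ | ⟨P'', P₂, hw₂, -, ht, h₂⟩
    · exact ⟨P₂, hw₁.trans hw₂, h₂⟩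
    · exact ⟨P₂, hw₁.trans (hw₂.tail ht), h₂⟩

lemma obs (hR : PiBisimGood R) {P Q : Term} (h : ExtClosure R P Q) (hQ : Obs Q) : Obs P := by
  obtain ⟨Q₁, ℓ, Q₂, hw, hs⟩ := hQ
  obtain ⟨P₁, hwP, h₁⟩ := h.exists_weakTau hR hw
  obtain ⟨P'', P', hw', hs', -⟩ := h₁.simulates_label hR hs
  exact ⟨P'', ℓ, P', hwP.trans hw', hs'⟩

lemma matchesDivergence_par (hR : PiBisimGood R) {L M P Q : Term} (hLM : ExtClosure R L M)
    (hPQ : ExtClosure R P Q) (hL : MatchesDivergence (ExtClosure R) L M)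
    (hP : MatchesDivergence (ExtClosure R) P Q) :
    MatchesDivergence (ExtClosure R) (.par L P) (.par M Q) := by
  intro f hf h0
  by_cases hcomm : ∃ n X Y, WeakTau M X ∧ WeakTau Q Y ∧ f n = .par X Y ∧
      ¬ParComponentStep X Y (f (n + 1))
  · obtain ⟨n, X, Y, hM, hQ, hfn, hcomm⟩ := hcomm
    obtain ⟨L₁, hwL, hL₁⟩ := hLM.exists_weakTau hR hM
    obtain ⟨P₁, hwP, hP₁⟩ := hPQ.exists_weakTau hR hQ
    obtain ⟨W'', W, hw, -, ht, hW⟩ :=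
      (hL₁.par_tau_cases hR hP₁ (hfn ▸ hf n)).resolve_left hcomm
    exact ⟨n + 1, by omega, W, .of_weakTau_tau ((hwL.par hwP).trans hw) ht, hW⟩
  push Not at hcomm
  obtain ⟨g, h, hgh, hstep⟩ := TauSeq.exists_interleave h0 hcomm
  obtain ⟨rfl, rfl⟩ := Term.par.inj (h0.symm.trans (hgh 0).1)
  obtain ⟨e, he, ⟨he0, hchain⟩ | ⟨he0, hchain⟩⟩ := exists_strictMono_chain_of_interleave hstep
  · obtain ⟨j, hj, L', hwL, hL'⟩ := hL (g ∘ e) hchain he0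
    obtain ⟨P₁, hwP, hP₁⟩ := hPQ.exists_weakTau hR (hgh (e j)).2.2
    exact ⟨e j, hj.trans (he.id_le j), _, hwL.par_weakTau hwP, (hgh (e j)).1 ▸ .par hL' hP₁⟩
  · obtain ⟨j, hj, P', hwP, hP'⟩ := hP (h ∘ e) hchain he0
    obtain ⟨L₁, hwL, hL₁⟩ := hLM.exists_weakTau hR (hgh (e j)).2.1
    exact ⟨e j, hj.trans (he.id_le j), _, hwL.par_tauWeak hwP, (hgh (e j)).1 ▸ .par hL₁ hP'⟩

lemma matchesDivergence (hR : PiBisimGood R) {P Q : Term} (h : ExtClosure R P Q) :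
    MatchesDivergence (ExtClosure R) P Q := by
  induction h with
  | base h =>
    intro f hf h0
    obtain ⟨k, hk, P', hw, h'⟩ := (hR.2.1 _ _ h).1 f h0 hf
    exact ⟨k, hk, P', hw, .base h'⟩
  | base_symm h =>
    intro f hf h0
    obtain ⟨k, hk, P', hw, h'⟩ := (hR.2.1 _ _ h).2 f h0 hf
    exact ⟨k, hk, P', hw, .base h'⟩
  | refl hP =>
    rintro f hf rfl
    exact ⟨1, le_rfl, f 1, ⟨f 1, hf 0, .refl⟩, .refl ((hf 0).closed hP)⟩
  | par hLM hPQ ihL ihP => exact matchesDivergence_par hR hLM hPQ ihL ihP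
  | res c _ ih =>
    intro f hf h0
    obtain ⟨g, hg0, hg, hfg⟩ := hf.res_inv h0
    obtain ⟨k, hk, P', hw, h'⟩ := ih g hg hg0
    exact ⟨k, hk, .res c P', hw.res c, hfg k ▸ .res c h'⟩

end ExtClosure

theorem PiBisimGood.goodAbs_extClosure {R : PRel} (hR : PiBisimGood R) :
    GoodAbs (ExtClosure R) :=
  ⟨ExtClosure.onProc hR.1, fun _ => .refl, fun _ _ h => ⟨h.symm.obs hR, h.obs hR⟩,
    ⟨fun _ _ _ _ => .par, fun _ _ c => .res c⟩,
    fun _ _ h => ⟨fun f h0 hf => h.matchesDivergence hR f hf h0,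
      fun f h0 hf => h.symm.matchesDivergence hR f hf h0⟩,
    fun _ _ h => ⟨fun _ => h.simulatesTau hR, fun _ hP =>
      (h.symm.simulatesTau hR hP).map (S' := flip (ExtClosure R)) id id (fun _ _ => id)
        fun _ _ => ExtClosure.symm⟩⟩

/-- the π-bisimilarity is contained in the absolute equality. -/
theorem pi_bisimilarity_subset_absolute_equality :
    ∀ P Q : Term, PiBisimilar P Q → AbsEq P Q := by
  rintro P Q ⟨R, hR, hPQ⟩
  exact ⟨ExtClosure R, hR.goodAbs_extClosure, .base hPQ⟩
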